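/- arXiv:1104.0555 — 3 statements merged into one kernel-verified Lean document; each statement's English description precedes it below -/
import Mathlib

section
/- Comparison lemma: let φ, ψ solve φ̇(τ) = f(φ(τ), t_m − τ) and ψ̇(τ) = f(ψ(τ), t_m + τ) with φ(0) = ψ(0) = 0, where f(θ,t) = −sin²θ − λA(t)cos²θ, λ > 0, and A is continuous, positive, and strictly increasing. Then ψ(τ) < φ(τ) < 0 for all τ > 0 with t_m + τ ≤ 1 and ψ(τ) ≥ −π/2. -/
/-!
Write `u = φ - ψ`. Since `sin²` is `1`-Lipschitz, the two right-hand sides differ by at least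
`λ (A (t_m + τ) - A (t_m - τ)) cos² φ - L |u|` with `L = 1 + λ A 1`. The forcing term is
nonnegative because `A` is increasing, and positive for small `τ > 0` because `φ ≈ 0` there.
A barrier argument first gives `u ≥ 0`; then `u e^{Lτ}` is nondecreasing and strictly increasing
near `0`, so `u > 0`. Finally `φ < 0` because `φ' < 0` everywhere.
-/

open Set Real Filter Topology

lemma sin_sq_sub_sin_sq (x y : ℝ) : sin x ^ 2 - sin y ^ 2 = sin (x + y) * sin (x - y) := by
  rw [sin_add, sin_sub]
  ring_nf
  rw [cos_sq', cos_sq']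
  ring

lemma abs_sin_sq_sub_sin_sq_le (x y : ℝ) : |sin x ^ 2 - sin y ^ 2| ≤ |x - y| := by
  rw [sin_sq_sub_sin_sq, abs_mul]
  calc |sin (x + y)| * |sin (x - y)| ≤ 1 * |x - y| :=
        mul_le_mul (abs_sin_le_one _) abs_sin_le_abs (abs_nonneg _) zero_le_one
    _ = |x - y| := one_mul _

lemma neg_sin_sq_sub_mul_cos_sq_neg {a : ℝ} (ha : 0 < a) (θ : ℝ) :
    -sin θ ^ 2 - a * cos θ ^ 2 < 0 := by
  have hs := sin_sq_le_one θ
  rw [cos_sq']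
  rcases le_total a 1 with h | h <;> nlinarith [sq_nonneg (sin θ)]

lemma sub_mul_cos_sq_sub_le_sub (a b x y : ℝ) :
    (b - a) * cos x ^ 2 - |b - 1| * |x - y| ≤
      (-sin x ^ 2 - a * cos x ^ 2) - (-sin y ^ 2 - b * cos y ^ 2) := by
  have hsplit : (-sin x ^ 2 - a * cos x ^ 2) - (-sin y ^ 2 - b * cos y ^ 2) =
      (b - a) * cos x ^ 2 + (b - 1) * (sin x ^ 2 - sin y ^ 2) := by
    rw [cos_sq', cos_sq']
    ring
  have hlip : -(|b - 1| * |x - y|) ≤ (b - 1) * (sin x ^ 2 - sin y ^ 2) :=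
    calc -(|b - 1| * |x - y|) ≤ -|(b - 1) * (sin x ^ 2 - sin y ^ 2)| := by
          rw [abs_mul]
          exact neg_le_neg
            (mul_le_mul_of_nonneg_left (abs_sin_sq_sub_sin_sq_le x y) (abs_nonneg _))
      _ ≤ _ := neg_abs_le _
  linarith

theorem nonneg_of_deriv_right_ge_neg_mul_abs {u u' : ℝ → ℝ} {a b L : ℝ}
    (hu : ContinuousOn u (Icc a b))
    (hu' : ∀ x ∈ Ico a b, HasDerivWithinAt u (u' x) (Ici x) x)
    (ha : 0 ≤ u a) (bound : ∀ x ∈ Ico a b, -(L * |u x|) ≤ u' x) :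
    ∀ ⦃x⦄, x ∈ Icc a b → 0 ≤ u x := by
  intro x hx
  have barrier : ∀ ε > 0, -u x ≤ ε * exp ((L + 1) * x) := by
    intro ε hε
    have hB : ∀ y, HasDerivAt (fun y => ε * exp ((L + 1) * y))
        (ε * exp ((L + 1) * y) * (L + 1)) y := fun y => by
      simpa [mul_assoc] using (((hasDerivAt_id y).const_mul (L + 1)).exp).const_mul ε
    refine image_le_of_deriv_right_lt_deriv_boundary (f := fun y => -u y) hu.neg
      (fun y hy => (hu' y hy).neg) (by linarith [mul_pos hε (exp_pos ((L + 1) * a))]) hB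
      (fun y hy hyB => ?_) hx
    have hBpos : 0 < ε * exp ((L + 1) * y) := mul_pos hε (exp_pos _)
    have habs : |u y| = ε * exp ((L + 1) * y) := by
      rw [abs_of_neg (by linarith), hyB]
    have := bound y hy
    rw [habs] at this
    nlinarith
  by_contra! hneg
  have hE := exp_pos ((L + 1) * x)
  have := barrier (-u x / (2 * exp ((L + 1) * x))) (div_pos (by linarith) (by positivity))
  rw [div_mul_eq_mul_div, mul_div_mul_right _ _ hE.ne'] at this
  linarith

theorem pos_of_deriv_ge_sub_mul_abs {u u' g : ℝ → ℝ} {a b L : ℝ} (hab : a < b)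
    (hu : ContinuousOn u (Icc a b)) (hu' : ∀ x ∈ Ico a b, HasDerivAt u (u' x) x)
    (ha : 0 ≤ u a) (hg : ∀ x ∈ Ico a b, 0 ≤ g x) (hg_pos : ∀ᶠ x in 𝓝[>] a, 0 < g x)
    (bound : ∀ x ∈ Ico a b, g x - L * |u x| ≤ u' x) : 0 < u b := by
  have hu_nonneg := nonneg_of_deriv_right_ge_neg_mul_abs (L := L) hu
    (fun x hx => (hu' x hx).hasDerivWithinAt) ha
    (fun x hx => by linarith [bound x hx, hg x hx])
  set w : ℝ → ℝ := fun x => u x * exp (L * x)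
  have hw' : ∀ x ∈ Ico a b, HasDerivAt w ((u' x + L * u x) * exp (L * x)) x := by
    intro x hx
    have hexp : HasDerivAt (fun x => exp (L * x)) (exp (L * x) * L) x := by
      simpa using ((hasDerivAt_id x).const_mul L).exp
    exact ((hu' x hx).mul hexp).congr_deriv (by ring)
  have hw_cont : ContinuousOn w (Icc a b) := hu.mul (by fun_prop)
  -- `e^{Lx}` absorbs the linear term because `|u| = u`
  have hw'_ge : ∀ x ∈ Ico a b, g x * exp (L * x) ≤ deriv w x := by
    intro x hx
    rw [(hw' x hx).deriv]
    have := bound x hx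
    rw [abs_of_nonneg (hu_nonneg (Ico_subset_Icc_self hx))] at this
    gcongr
    linarith
  have hinterior : ∀ {c d}, a ≤ c → d ≤ b → interior (Icc c d) ⊆ Ico a b := by
    intro c d hc hd
    rw [interior_Icc]
    exact Ioo_subset_Ico_self.trans (Ico_subset_Ico hc hd)
  obtain ⟨c, ⟨hac, hcb⟩, hc⟩ := (mem_nhdsGT_iff_exists_mem_Ioc_Ioo_subset hab).1 hg_pos
  have hstart : w a < w c := by
    refine strictMonoOn_of_deriv_pos (convex_Icc a c) (hw_cont.mono (Icc_subset_Icc le_rfl hcb))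
      (fun x hx => ?_) (left_mem_Icc.2 hac.le) (right_mem_Icc.2 hac.le) hac
    have hgx : 0 < g x := hc (interior_Icc (a := a) ▸ hx)
    exact (mul_pos hgx (exp_pos _)).trans_le (hw'_ge x (hinterior le_rfl hcb hx))
  have hrest : w c ≤ w b :=
    monotoneOn_of_deriv_nonneg (convex_Icc c b) (hw_cont.mono (Icc_subset_Icc hac.le le_rfl))
      (fun x hx => (hw' x (hinterior hac.le le_rfl hx)).differentiableAt.differentiableWithinAt)
      (fun x hx => (mul_nonneg (hg x (hinterior hac.le le_rfl hx)) (exp_pos _).le).trans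
        (hw'_ge x (hinterior hac.le le_rfl hx)))
      (left_mem_Icc.2 hcb) (right_mem_Icc.2 hcb) hcb
  have hwa : 0 ≤ w a := mul_nonneg ha (exp_pos _).le
  exact (mul_pos_iff_of_pos_right (exp_pos (L * b))).1 (by linarith)

theorem riccati_solution_neg {θ a : ℝ → ℝ} {T : ℝ} (hT : 0 < T)
    (ha : ∀ t ∈ Icc 0 T, 0 < a t)
    (hθ : ∀ t ∈ Icc 0 T, HasDerivAt θ (-sin (θ t) ^ 2 - a t * cos (θ t) ^ 2) t)
    (h0 : θ 0 = 0) : θ T < 0 := by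
  have hanti : StrictAntiOn θ (Icc 0 T) := by
    refine strictAntiOn_of_deriv_neg (convex_Icc 0 T)
      (fun t ht => (hθ t ht).continuousAt.continuousWithinAt) (fun t ht => ?_)
    rw [interior_Icc] at ht
    rw [(hθ t (Ioo_subset_Icc_self ht)).deriv]
    exact neg_sin_sq_sub_mul_cos_sq_neg (ha t (Ioo_subset_Icc_self ht)) _
  simpa [h0] using hanti (left_mem_Icc.2 hT.le) (right_mem_Icc.2 hT.le) hT

theorem riccati_comparison {θ η a b : ℝ → ℝ} {T M : ℝ} (hT : 0 < T)
    (hθ : ∀ t ∈ Icc 0 T, HasDerivAt θ (-sin (θ t) ^ 2 - a t * cos (θ t) ^ 2) t)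
    (hη : ∀ t ∈ Icc 0 T, HasDerivAt η (-sin (η t) ^ 2 - b t * cos (η t) ^ 2) t)
    (hθ0 : θ 0 = 0) (hη0 : η 0 = 0)
    (hab : ∀ t ∈ Icc 0 T, a t ≤ b t) (hab_lt : ∀ t ∈ Ioo 0 T, a t < b t)
    (hM : ∀ t ∈ Icc 0 T, |b t - 1| ≤ M) : η T < θ T := by
  have hcos : ∀ᶠ t in 𝓝 0, 0 < cos (θ t) :=
    (continuous_cos.continuousAt.comp (hθ 0 (left_mem_Icc.2 hT.le)).continuousAt).eventually
      (lt_mem_nhds (by simp [hθ0]))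
  have hg_pos : ∀ᶠ t in 𝓝[>] 0, 0 < (b t - a t) * cos (θ t) ^ 2 := by
    filter_upwards [nhdsWithin_le_nhds hcos, Ioo_mem_nhdsGT hT] with t hcos ht
    have := sub_pos.2 (hab_lt t ht)
    positivity
  have bound : ∀ t ∈ Ico 0 T, (b t - a t) * cos (θ t) ^ 2 - M * |(θ - η) t| ≤
      (-sin (θ t) ^ 2 - a t * cos (θ t) ^ 2) - (-sin (η t) ^ 2 - b t * cos (η t) ^ 2) := by
    intro t ht
    have := sub_mul_cos_sq_sub_le_sub (a t) (b t) (θ t) (η t)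
    have := mul_le_mul_of_nonneg_right (hM t (Ico_subset_Icc_self ht)) (abs_nonneg (θ t - η t))
    rw [Pi.sub_apply]
    linarith
  have := pos_of_deriv_ge_sub_mul_abs hT
    (fun t ht => ((hθ t ht).sub (hη t ht)).continuousAt.continuousWithinAt)
    (fun t ht => (hθ t (Ico_subset_Icc_self ht)).sub (hη t (Ico_subset_Icc_self ht)))
    (by simp [hθ0, hη0])
    (fun t ht => mul_nonneg (sub_nonneg.2 (hab t (Ico_subset_Icc_self ht))) (sq_nonneg _))
    hg_pos bound
  simpa using this

theorem stmt12_general (A φ ψ : ℝ → ℝ) (lam tm : ℝ)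
    (hlam : 0 < lam)
    (hA_pos : ∀ t ∈ Icc (0:ℝ) 1, 0 < A t)
    (hA_mono : StrictMonoOn A (Icc 0 1))
    (hφ : ∀ τ ∈ Icc (0:ℝ) (min tm (1 - tm)),
      HasDerivAt φ
        (-(Real.sin (φ τ)) ^ 2 - lam * A (tm - τ) * (Real.cos (φ τ)) ^ 2) τ)
    (hψ : ∀ τ ∈ Icc (0:ℝ) (min tm (1 - tm)),
      HasDerivAt ψ
        (-(Real.sin (ψ τ)) ^ 2 - lam * A (tm + τ) * (Real.cos (ψ τ)) ^ 2) τ)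
    (hφ0 : φ 0 = 0) (hψ0 : ψ 0 = 0) :
    ∀ τ, 0 < τ → τ ≤ tm → tm + τ ≤ 1 → -(Real.pi / 2) ≤ ψ τ →
      ψ τ < φ τ ∧ φ τ < 0 := by
  intro τ hτ hτtm hτ1 _
  have hdom : ∀ σ ∈ Icc 0 τ, σ ∈ Icc (0:ℝ) (min tm (1 - tm)) := fun σ hσ =>
    ⟨hσ.1, le_min (by linarith [hσ.2]) (by linarith [hσ.2])⟩
  have hminus : ∀ σ ∈ Icc 0 τ, tm - σ ∈ Icc (0:ℝ) 1 := fun σ hσ =>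
    ⟨by linarith [hσ.2], by linarith [hσ.1]⟩
  have hplus : ∀ σ ∈ Icc 0 τ, tm + σ ∈ Icc (0:ℝ) 1 := fun σ hσ =>
    ⟨by linarith [hσ.1], by linarith [hσ.2]⟩
  have hM : ∀ σ ∈ Icc 0 τ, |lam * A (tm + σ) - 1| ≤ 1 + lam * A 1 := fun σ hσ => by
    have h1 := mul_pos hlam (hA_pos _ (hplus σ hσ))
    have h2 := hA_mono.monotoneOn (hplus σ hσ) ⟨zero_le_one, le_rfl⟩ (hplus σ hσ).2
    rw [abs_le]
    constructor <;> nlinarith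
  refine ⟨riccati_comparison (a := fun σ => lam * A (tm - σ)) hτ
      (fun σ hσ => hφ σ (hdom σ hσ)) (fun σ hσ => hψ σ (hdom σ hσ)) hφ0 hψ0
      (fun σ hσ => ?_) (fun σ hσ => ?_) hM,
    riccati_solution_neg hτ (fun σ hσ => mul_pos hlam (hA_pos _ (hminus σ hσ)))
      (fun σ hσ => hφ σ (hdom σ hσ)) hφ0⟩
  · exact mul_le_mul_of_nonneg_left (hA_mono.monotoneOn (hminus σ hσ) (hplus σ hσ)
      (by linarith [hσ.1])) hlam.le
  · exact mul_lt_mul_of_pos_left (hA_mono (hminus σ (Ioo_subset_Icc_self hσ))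
      (hplus σ (Ioo_subset_Icc_self hσ)) (by linarith [hσ.1])) hlam

theorem stmt12 (A φ ψ : ℝ → ℝ) (lam tm : ℝ)
    (hlam : 0 < lam)
    (hA_cont : ContinuousOn A (Icc 0 1))
    (hA_pos : ∀ t ∈ Icc (0:ℝ) 1, 0 < A t)
    (hA_mono : StrictMonoOn A (Icc 0 1))
    (htm : tm ∈ Ioo (0:ℝ) 1)
    (hφ : ∀ τ ∈ Icc (0:ℝ) (min tm (1 - tm)),
      HasDerivAt φ
        (-(Real.sin (φ τ)) ^ 2 - lam * A (tm - τ) * (Real.cos (φ τ)) ^ 2) τ)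
    (hψ : ∀ τ ∈ Icc (0:ℝ) (min tm (1 - tm)),
      HasDerivAt ψ
        (-(Real.sin (ψ τ)) ^ 2 - lam * A (tm + τ) * (Real.cos (ψ τ)) ^ 2) τ)
    (hφ0 : φ 0 = 0) (hψ0 : ψ 0 = 0) :
    ∀ τ, 0 < τ → τ ≤ tm → tm + τ ≤ 1 → -(Real.pi / 2) ≤ ψ τ →
      ψ τ < φ τ ∧ φ τ < 0 :=
  stmt12_general A φ ψ lam tm hlam hA_pos hA_mono hφ hψ hφ0 hψ0
end

section
/- Main theorem (1D): let a be a positive, strictly increasing C² function on [0,1], let u be the principal eigenfunction of (a u')' = −λu with u(0)=u(1)=0 and u>0 on (0,1), let m be the (unique) maximizer of u, and let c be the unique point with ∫₀ᶜ a⁻¹ = ∫ᶜ¹ a⁻¹. Then c < m. -/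
open Set Real

theorem stmt13 (a u w : ℝ → ℝ) (lam c m : ℝ)
    (ha : ContDiffOn ℝ 2 a (Icc 0 1))
    (ha_pos : ∀ x ∈ Icc (0:ℝ) 1, 0 < a x)
    (ha_mono : StrictMonoOn a (Icc 0 1))
    (hlam : 0 < lam)
    (hu' : ∀ x ∈ Icc (0:ℝ) 1, HasDerivAt u (w x) x)
    (hode : ∀ x ∈ Icc (0:ℝ) 1, HasDerivAt (fun y => a y * w y) (-lam * u x) x)
    (hbc0 : u 0 = 0) (hbc1 : u 1 = 0)
    (hupos : ∀ x ∈ Ioo (0:ℝ) 1, 0 < u x)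
    (hm : m ∈ Ioo (0:ℝ) 1)
    (hmax : ∀ x ∈ Icc (0:ℝ) 1, u x ≤ u m)
    (hc : c ∈ Ioo (0:ℝ) 1)
    (hbisect : (∫ t in (0:ℝ)..c, (a t)⁻¹) = ∫ t in c..(1:ℝ), (a t)⁻¹) :
    c < m := by
  obtain ⟨hm0, hm1⟩ := hm
  obtain ⟨hc0, hc1⟩ := hc
  set v : ℝ → ℝ := fun y => a y * w y with hv_def
  have hv' : ∀ x ∈ Icc (0:ℝ) 1, HasDerivAt v (-lam * u x) x := hode
  -- continuous positive extension of a
  set aa : ℝ → ℝ := fun t => a ((projIcc (0:ℝ) 1 zero_le_one t : Icc (0:ℝ) 1) : ℝ) with haa_def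
  have haa_cont : Continuous aa := ha.continuousOn.restrict.comp continuous_projIcc
  have haa_pos : ∀ t, 0 < aa t := fun t => ha_pos _ (projIcc (0:ℝ) 1 zero_le_one t).2
  have haa_eq : ∀ t ∈ Icc (0:ℝ) 1, aa t = a t := fun t ht => by
    simp [haa_def, projIcc_of_mem zero_le_one ht]
  have hf_cont : Continuous (fun t => (aa t)⁻¹) := haa_cont.inv₀ fun t => (haa_pos t).ne'
  have hf_pos : ∀ t, 0 < (aa t)⁻¹ := fun t => inv_pos.mpr (haa_pos t)
  -- the primitive sf
  set sf : ℝ → ℝ := fun x => ∫ t in (0:ℝ)..x, (aa t)⁻¹ with hsf_def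
  have hsf_deriv : ∀ x : ℝ, HasDerivAt sf (aa x)⁻¹ x := fun x =>
    intervalIntegral.integral_hasDerivAt_right (hf_cont.intervalIntegrable 0 x)
      (hf_cont.stronglyMeasurableAtFilter _ _) hf_cont.continuousAt
  have hsf_mono : StrictMono sf :=
    strictMono_of_deriv_pos fun x => by rw [(hsf_deriv x).deriv]; exact hf_pos x
  have hsf_cont : Continuous sf :=
    (Differentiable.continuous fun x => (hsf_deriv x).differentiableAt)
  have hsf0 : sf 0 = 0 := intervalIntegral.integral_same
  set S : ℝ := sf 1 with hS_def
  have hS_pos : 0 < S := by rw [hS_def, ← hsf0]; exact hsf_mono zero_lt_one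
  have hmemS : ∀ x : Icc (0:ℝ) 1, sf x ∈ Icc (0:ℝ) S := fun x =>
    ⟨by simpa [hsf0] using hsf_mono.monotone x.2.1, hsf_mono.monotone x.2.2⟩
  -- homeomorphism
  have hbij : Function.Bijective (fun x : Icc (0:ℝ) 1 => (⟨sf x, hmemS x⟩ : Icc (0:ℝ) S)) := by
    constructor
    · intro x y h
      exact Subtype.ext (hsf_mono.injective (congrArg Subtype.val h))
    · rintro ⟨σ, hσ⟩
      obtain ⟨x, hx, hsx⟩ := intermediate_value_Icc zero_le_one hsf_cont.continuousOn
        (by rw [hsf0]; exact hσ)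
      exact ⟨⟨x, hx⟩, Subtype.ext hsx⟩
  set F : Icc (0:ℝ) 1 ≃ Icc (0:ℝ) S := Equiv.ofBijective _ hbij with hF_def
  have hF_cont : Continuous F := by
    exact Continuous.subtype_mk (hsf_cont.comp continuous_subtype_val) _
  set homeo : Icc (0:ℝ) 1 ≃ₜ Icc (0:ℝ) S := hF_cont.homeoOfEquivCompactToT2 with hh_def
  set ρ : ℝ → ℝ := fun σ => ((homeo.symm (projIcc 0 S hS_pos.le σ) : Icc (0:ℝ) 1) : ℝ) with hρ_def
  have hρ_cont : Continuous ρ :=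
    continuous_subtype_val.comp (homeo.symm.continuous.comp continuous_projIcc)
  have hρ_mem : ∀ σ, ρ σ ∈ Icc (0:ℝ) 1 := fun σ => (homeo.symm (projIcc 0 S hS_pos.le σ)).2
  have hρ_left : ∀ σ ∈ Icc (0:ℝ) S, sf (ρ σ) = σ := by
    intro σ hσ
    have h2 := congrArg Subtype.val (homeo.apply_symm_apply (projIcc 0 S hS_pos.le σ))
    calc sf (ρ σ) = ((projIcc 0 S hS_pos.le σ : Icc (0:ℝ) S) : ℝ) := h2
      _ = σ := by rw [projIcc_of_mem hS_pos.le hσ]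
  have hρ_right : ∀ x ∈ Icc (0:ℝ) 1, ρ (sf x) = x := fun x hx =>
    hsf_mono.injective (hρ_left _ (hmemS ⟨x, hx⟩))
  -- bisection: sf c = S / 2
  have hint_eq1 : (∫ t in (0:ℝ)..c, (a t)⁻¹) = sf c := by
    rw [hsf_def]
    refine intervalIntegral.integral_congr fun t ht => ?_
    rw [uIcc_of_le hc0.le] at ht
    rw [haa_eq t ⟨ht.1, ht.2.trans hc1.le⟩]
  have hint_eq2 : (∫ t in c..(1:ℝ), (a t)⁻¹) = S - sf c := by
    have hadd : sf c + (∫ t in c..(1:ℝ), (aa t)⁻¹) = S := by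
      rw [hsf_def, hS_def]
      exact intervalIntegral.integral_add_adjacent_intervals
        (hf_cont.intervalIntegrable 0 c) (hf_cont.intervalIntegrable c 1)
    have : (∫ t in c..(1:ℝ), (a t)⁻¹) = ∫ t in c..(1:ℝ), (aa t)⁻¹ := by
      refine intervalIntegral.integral_congr fun t ht => ?_
      rw [uIcc_of_le hc1.le] at ht
      rw [haa_eq t ⟨hc0.le.trans ht.1, ht.2⟩]
    rw [this]; linarith
  have hsc : 2 * sf c = S := by
    rw [hint_eq1, hint_eq2] at hbisect; linarith
  -- the reflection r
  set r : ℝ → ℝ := fun x => ρ (S - sf x) with hr_def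
  have hr_mem : ∀ x, r x ∈ Icc (0:ℝ) 1 := fun x => hρ_mem _
  have hr_cont : Continuous r := hρ_cont.comp (continuous_const.sub hsf_cont)
  have hr0 : r 0 = 1 := by
    have : ρ (sf 1) = 1 := hρ_right 1 ⟨zero_le_one, le_rfl⟩
    rw [hr_def]; simp only [hsf0, sub_zero]
    exact this
  have hrc : r c = c := by
    have h1 : S - sf c = sf c := by linarith
    rw [hr_def]; simp only [h1]
    exact hρ_right c ⟨hc0.le, hc1.le⟩
  have hsfc_mem : ∀ x ∈ Ioo (0:ℝ) c, S - sf x ∈ Ioo (0:ℝ) S ∧ c < r x ∧ r x < 1 := by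
    intro x hx
    have hx0 : sf 0 < sf x := hsf_mono hx.1
    have hxc : sf x < sf c := hsf_mono hx.2
    rw [hsf0] at hx0
    have hmem : S - sf x ∈ Ioo (0:ℝ) S := ⟨by linarith, by linarith⟩
    have hsr : sf (r x) = S - sf x := hρ_left _ (Ioo_subset_Icc_self hmem)
    constructor
    · exact hmem
    constructor
    · have : sf c < sf (r x) := by rw [hsr]; linarith
      exact hsf_mono.lt_iff_lt.mp this
    · have : sf (r x) < sf 1 := by rw [hsr, ← hS_def]; linarith
      exact hsf_mono.lt_iff_lt.mp this
  have hρ_deriv : ∀ σ ∈ Ioo (0:ℝ) S, HasDerivAt ρ (aa (ρ σ)) σ := by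
    intro σ hσ
    have h := HasDerivAt.of_local_left_inverse hρ_cont.continuousAt
      (hsf_deriv (ρ σ)) (inv_ne_zero (haa_pos (ρ σ)).ne')
      (Filter.eventually_of_mem (Ioo_mem_nhds hσ.1 hσ.2)
        fun y hy => hρ_left y (Ioo_subset_Icc_self hy))
    rwa [inv_inv] at h
  have hr_deriv : ∀ x ∈ Ioo (0:ℝ) c, HasDerivAt r (aa (r x) * -(aa x)⁻¹) x := by
    intro x hx
    have hmem := (hsfc_mem x hx).1
    have h2 := (hρ_deriv _ hmem).comp x ((hasDerivAt_const x S).sub (hsf_deriv x))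
    have h3 : HasDerivAt r (aa (ρ (S - sf x)) * (0 - (aa x)⁻¹)) x := h2
    convert h3 using 1
    ring
  -- continuity of u, v
  have hu_cont : ContinuousOn u (Icc 0 1) := fun x hx =>
    (hu' x hx).continuousAt.continuousWithinAt
  have hv_cont : ContinuousOn v (Icc 0 1) := fun x hx =>
    (hv' x hx).continuousAt.continuousWithinAt
  -- the Wronskian-type function
  set W : ℝ → ℝ := fun x => v x * u (r x) + u x * v (r x) with hW_def
  have hW_deriv : ∀ x ∈ Ioo (0:ℝ) c, HasDerivAt W
      (lam * u x * u (r x) * (a (r x) - a x) / a x) x ∧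
      0 < lam * u x * u (r x) * (a (r x) - a x) / a x := by
    intro x hx
    obtain ⟨hmem, hcr, hr1⟩ := hsfc_mem x hx
    have hx1 : x ∈ Icc (0:ℝ) 1 := ⟨hx.1.le, (hx.2.trans hc1).le⟩
    have hrx1 : r x ∈ Icc (0:ℝ) 1 := ⟨(hc0.trans hcr).le, hr1.le⟩
    have hD := hr_deriv x hx
    have h1 : HasDerivAt (fun y => u (r y)) (w (r x) * (aa (r x) * -(aa x)⁻¹)) x :=
      (hu' (r x) hrx1).comp x hD
    have h2 : HasDerivAt (fun y => v (r y)) (-lam * u (r x) * (aa (r x) * -(aa x)⁻¹)) x :=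
      (hv' (r x) hrx1).comp x hD
    have hW1 : HasDerivAt W
        ((-lam * u x) * u (r x) + v x * (w (r x) * (aa (r x) * -(aa x)⁻¹)) +
         (w x * v (r x) + u x * (-lam * u (r x) * (aa (r x) * -(aa x)⁻¹)))) x :=
      ((hv' x hx1).mul h1).add ((hu' x hx1).mul h2)
    have hax : aa x = a x := haa_eq x hx1
    have harx : aa (r x) = a (r x) := haa_eq (r x) hrx1
    have hane : a x ≠ 0 := (ha_pos x hx1).ne'
    have hux : 0 < u x := hupos x ⟨hx.1, hx.2.trans hc1⟩
    have hurx : 0 < u (r x) := hupos (r x) ⟨hc0.trans hcr, hr1⟩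
    have haxlt : a x < a (r x) := ha_mono hx1 hrx1 (hx.2.trans hcr)
    constructor
    · convert hW1 using 1
      simp only [hv_def, hax, harx]
      field_simp
      ring
    · have hapos := ha_pos x hx1
      apply div_pos _ hapos
      have h5 : 0 < a (r x) - a x := by linarith
      positivity
  have hW_cont : ContinuousOn W (Icc 0 c) := by
    have hsub : Icc (0:ℝ) c ⊆ Icc 0 1 := Icc_subset_Icc le_rfl hc1.le
    have h1 : ContinuousOn (fun x => u (r x)) (Icc 0 c) :=
      hu_cont.comp hr_cont.continuousOn fun x _ => hr_mem x
    have h2 : ContinuousOn (fun x => v (r x)) (Icc 0 c) :=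
      hv_cont.comp hr_cont.continuousOn fun x _ => hr_mem x
    exact ((hv_cont.mono hsub).mul h1).add ((hu_cont.mono hsub).mul h2)
  have hW_mono : StrictMonoOn W (Icc 0 c) := by
    apply strictMonoOn_of_deriv_pos (convex_Icc 0 c) hW_cont
    intro x hx
    rw [interior_Icc] at hx
    rw [(hW_deriv x hx).1.deriv]
    exact (hW_deriv x hx).2
  have hW0 : W 0 = 0 := by simp [hW_def, hr0, hbc0, hbc1]
  have hWc : W c = 2 * (u c * v c) := by simp only [hW_def, hrc]; ring
  have hWcpos : 0 < W c := by
    have := hW_mono (left_mem_Icc.mpr hc0.le) (right_mem_Icc.mpr hc0.le) hc0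
    rwa [hW0] at this
  have hucpos : 0 < u c := hupos c ⟨hc0, hc1⟩
  rw [hWc] at hWcpos
  have hvc_pos : 0 < v c := by
    by_contra hcon
    push_neg at hcon
    nlinarith [mul_nonpos_of_nonneg_of_nonpos hucpos.le hcon]
  -- v m = 0, v strictly decreasing
  have hwm : w m = 0 := by
    have hloc : IsLocalMax u m := Filter.eventually_of_mem (Icc_mem_nhds hm0 hm1) hmax
    exact hloc.hasDerivAt_eq_zero (hu' m ⟨hm0.le, hm1.le⟩)
  have hvm : v m = 0 := by simp [hv_def, hwm]
  have hv_anti : StrictAntiOn v (Icc 0 1) := by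
    apply strictAntiOn_of_deriv_neg (convex_Icc 0 1) hv_cont
    intro x hx
    rw [interior_Icc] at hx
    rw [(hv' x (Ioo_subset_Icc_self hx)).deriv]
    have := hupos x hx
    nlinarith
  by_contra hcon
  push_neg at hcon
  rcases eq_or_lt_of_le hcon with he | hlt
  · have : v c = 0 := he ▸ hvm
    linarith
  · have := hv_anti ⟨hm0.le, hm1.le⟩ ⟨hc0.le, hc1.le⟩ hlt
    rw [hvm] at this
    linarith
end

section
/- If A : [0,1] → ℝ is continuous, positive, and strictly increasing, and θ solves θ̇ = −sin²θ − λA(t)cos²θ with θ(0) = π/2 and θ(1) = −π/2 for some λ > 0, then the unique zero t_m of θ satisfies t_m > 1/2. -/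
open Set Real

/-!
Suppose `t_m ≤ 1/2` and compare `θ` with its reflection in `t_m`. The sum
`d(t) = θ(t_m + t) + θ(t_m - t)` vanishes at `t = 0`, and since
`sin² u - sin² v = sin (u + v) sin (u - v)`, its derivative is at most
`K |d| - λ (A(t_m + t) - A(t_m - t)) cos² θ(t_m - t)` for a constant `K`. The last term is
positive because `A` increases and `|θ| < π/2` on `(0, 1)`, so a Grönwall-type comparison gives
`d(t_m) < 0`, that is `θ(2 t_m) < -θ(0) = -π/2 = θ(1)`, which is impossible since `θ` decreases
and `2 t_m ≤ 1`.
-/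

noncomputable def pruferField (c x : ℝ) : ℝ := -sin x ^ 2 - c * cos x ^ 2

theorem pruferField_neg {c : ℝ} (hc : 0 < c) (x : ℝ) : pruferField c x < 0 := by
  unfold pruferField
  nlinarith [sin_sq_add_cos_sq x, sq_nonneg (sin x), mul_nonneg hc.le (sq_nonneg (cos x))]

theorem pruferField_sub_pruferField (c c' u v : ℝ) :
    pruferField c u - pruferField c' v
      = (c - 1) * (sin (u + v) * sin (u - v)) - (c - c') * cos v ^ 2 := by
  simp only [pruferField, sin_add, sin_sub]
  linear_combination (-c + (c - 1) * sin v ^ 2) * sin_sq_add_cos_sq u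
    + (c - (c - 1) * sin u ^ 2) * sin_sq_add_cos_sq v

theorem pruferField_sub_le {c c' K : ℝ} (u v : ℝ) (hK : |c - 1| ≤ K) :
    pruferField c u - pruferField c' v ≤ K * |u + v| - (c - c') * cos v ^ 2 := by
  have h : (c - 1) * (sin (u + v) * sin (u - v)) ≤ K * |u + v| := calc
    _ ≤ |(c - 1) * (sin (u + v) * sin (u - v))| := le_abs_self _
    _ = |c - 1| * (|sin (u + v)| * |sin (u - v)|) := by rw [abs_mul, abs_mul]
    _ ≤ K * (|u + v| * 1) :=
      mul_le_mul hK (mul_le_mul abs_sin_le_abs (abs_sin_le_one _) (abs_nonneg _) (abs_nonneg _))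
        (by positivity) ((abs_nonneg _).trans hK)
    _ = K * |u + v| := by rw [mul_one]
  rw [pruferField_sub_pruferField]
  linarith

theorem nonpos_of_hasDerivWithinAt_le_mul_abs {f f' : ℝ → ℝ} {a b K : ℝ}
    (hf : ContinuousOn f (Icc a b)) (hf' : ∀ x ∈ Ico a b, HasDerivWithinAt f (f' x) (Ici x) x)
    (ha : f a ≤ 0) (bound : ∀ x ∈ Ico a b, f' x ≤ K * |f x|) :
    ∀ x ∈ Icc a b, f x ≤ 0 := by
  intro x hx
  refine le_of_forall_pos_le_add fun ε hε => ?_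
  set L := |K| + 1
  set B : ℝ → ℝ := fun t => ε * exp (L * (t - x))
  have hB : ∀ t, HasDerivAt B (L * B t) t := fun t =>
    ((((hasDerivAt_id' t).sub_const x).const_mul L).exp.const_mul ε).congr_deriv (by ring)
  -- `f` can only reach the barrier `B > 0` where `f > 0`, and there `f' ≤ |K| f < L f`.
  have hfB := image_le_of_deriv_right_lt_deriv_boundary hf hf' (ha.trans (by positivity)) hB
    (fun t ht hft => by
      have hBt : 0 < B t := by positivity
      calc f' t ≤ K * |f t| := bound t ht
        _ ≤ |K| * B t := by rw [hft, abs_of_pos hBt]; gcongr; exact le_abs_self K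
        _ < L * B t := by gcongr; linarith) hx
  simpa [B] using hfB

theorem neg_of_hasDerivAt_add_mul_neg {f f' : ℝ → ℝ} {a b K : ℝ} (hab : a < b)
    (hf : ContinuousOn f (Icc a b)) (hf' : ∀ x ∈ Ioo a b, HasDerivAt f (f' x) x)
    (ha : f a ≤ 0) (hneg : ∀ x ∈ Ioo a b, f' x + K * f x < 0) : f b < 0 := by
  have hanti : StrictAntiOn (fun t => exp (K * t) * f t) (Icc a b) := by
    refine strictAntiOn_of_hasDerivWithinAt_neg (convex_Icc a b)
      (f' := fun t => exp (K * t) * (f' t + K * f t))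
      ((continuous_exp.comp (continuous_const.mul continuous_id)).continuousOn.mul hf)
      (fun t ht => ?_) (fun t ht => ?_) <;> rw [interior_Icc] at ht
    · exact ((((hasDerivAt_id' t).const_mul K).exp.mul (hf' t ht)).congr_deriv
        (by ring)).hasDerivWithinAt
    · exact mul_neg_of_pos_of_neg (exp_pos _) (hneg t ht)
  have hlt := hanti (left_mem_Icc.2 hab.le) (right_mem_Icc.2 hab.le) hab
  have hfa : exp (K * a) * f a ≤ 0 := mul_nonpos_of_nonneg_of_nonpos (exp_pos _).le ha
  exact neg_of_mul_neg_right (hlt.trans_le hfa) (exp_pos _).le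

theorem neg_of_hasDerivAt_lt_mul_abs {f f' : ℝ → ℝ} {a b K : ℝ} (hab : a < b)
    (hf : ∀ x ∈ Icc a b, HasDerivAt f (f' x) x) (ha : f a ≤ 0)
    (hle : ∀ x ∈ Ico a b, f' x ≤ K * |f x|) (hlt : ∀ x ∈ Ioo a b, f' x < K * |f x|) :
    f b < 0 := by
  have hcont : ContinuousOn f (Icc a b) := fun x hx => (hf x hx).continuousAt.continuousWithinAt
  have hnonpos := nonpos_of_hasDerivWithinAt_le_mul_abs hcont
    (fun x hx => (hf x (Ico_subset_Icc_self hx)).hasDerivWithinAt) ha hle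
  refine neg_of_hasDerivAt_add_mul_neg (K := K) hab hcont
    (fun x hx => hf x (Ioo_subset_Icc_self hx)) ha fun x hx => ?_
  have h := hlt x hx
  rw [abs_of_nonpos (hnonpos x (Ioo_subset_Icc_self hx))] at h
  linarith

theorem pruferField_reflect_add_neg {c θ : ℝ → ℝ} {m r : ℝ} (hr : 0 < r)
    (hc : StrictMonoOn c (Icc (m - r) (m + r)))
    (hθ : ∀ t ∈ Icc (m - r) (m + r), HasDerivAt θ (pruferField (c t) (θ t)) t)
    (hθm : θ m = 0) (hcos : ∀ s ∈ Ioo (m - r) m, cos (θ s) ≠ 0) :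
    θ (m + r) + θ (m - r) < 0 := by
  have mem_add : ∀ t ∈ Icc 0 r, m + t ∈ Icc (m - r) (m + r) := fun t ht =>
    ⟨by linarith [ht.1], by linarith [ht.2]⟩
  have mem_sub : ∀ t ∈ Icc 0 r, m - t ∈ Icc (m - r) (m + r) := fun t ht =>
    ⟨by linarith [ht.2], by linarith [ht.1]⟩
  have hd : ∀ t ∈ Icc 0 r, HasDerivAt (fun t => θ (m + t) + θ (m - t))
      (pruferField (c (m + t)) (θ (m + t)) - pruferField (c (m - t)) (θ (m - t))) t := by
    intro t ht
    have hadd := (hθ _ (mem_add t ht)).comp t ((hasDerivAt_id' t).const_add m)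
    have hsub := (hθ _ (mem_sub t ht)).comp t ((hasDerivAt_id' t).const_sub m)
    exact (hadd.add hsub).congr_deriv (by ring)
  set K := max |c m - 1| |c (m + r) - 1|
  have hK : ∀ t ∈ Icc 0 r, |c (m + t) - 1| ≤ K := by
    intro t ht
    have hlo : c m ≤ c (m + t) :=
      hc.monotoneOn ⟨by linarith, by linarith⟩ (mem_add t ht) (by linarith [ht.1])
    have hhi : c (m + t) ≤ c (m + r) :=
      hc.monotoneOn (mem_add t ht) ⟨by linarith, le_rfl⟩ (by linarith [ht.2])
    exact abs_le_max_abs_abs (sub_le_sub_right hlo 1) (sub_le_sub_right hhi 1)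
  have hlt : ∀ t ∈ Ioo 0 r, c (m - t) < c (m + t) := fun t ht =>
    hc (mem_sub t (Ioo_subset_Icc_self ht)) (mem_add t (Ioo_subset_Icc_self ht))
      (by linarith [ht.1])
  refine neg_of_hasDerivAt_lt_mul_abs (f := fun t => θ (m + t) + θ (m - t)) (K := K) hr hd
    (by simp [hθm]) (fun t ht => ?_) (fun t ht => ?_)
  · have ht' := Ico_subset_Icc_self ht
    refine (pruferField_sub_le _ _ (hK t ht')).trans (sub_le_self _ (mul_nonneg ?_ (sq_nonneg _)))
    exact sub_nonneg.2 (hc.monotoneOn (mem_sub t ht') (mem_add t ht') (by linarith [ht.1]))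
  · refine (pruferField_sub_le _ _ (hK t (Ioo_subset_Icc_self ht))).trans_lt
      (sub_lt_self _ (mul_pos (sub_pos.2 (hlt t ht)) (sq_pos_of_ne_zero ?_)))
    exact hcos _ ⟨by linarith [ht.2], by linarith [ht.1]⟩

theorem stmt18_general (A θ : ℝ → ℝ) (lam tm : ℝ)
    (hlam : 0 < lam)
    (hA_pos : ∀ t ∈ Icc (0:ℝ) 1, 0 < A t)
    (hA_mono : StrictMonoOn A (Icc 0 1))
    (hθ : ∀ t ∈ Icc (0:ℝ) 1,
      HasDerivAt θ (-(Real.sin (θ t)) ^ 2 - lam * A t * (Real.cos (θ t)) ^ 2) t)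
    (hθ0 : θ 0 = Real.pi / 2)
    (hθ1 : θ 1 = -(Real.pi / 2))
    (htm : tm ∈ Ioo (0:ℝ) 1)
    (hθtm : θ tm = 0) :
    1 / 2 < tm := by
  by_contra! htm_le
  have hsub : Icc (tm - tm) (tm + tm) ⊆ Icc 0 1 := Icc_subset_Icc (by simp) (by linarith)
  have hθ' : ∀ t ∈ Icc (0:ℝ) 1, HasDerivAt θ (pruferField (lam * A t) (θ t)) t := hθ
  have hanti : StrictAntiOn θ (Icc 0 1) :=
    strictAntiOn_of_hasDerivWithinAt_neg (convex_Icc 0 1)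
      (fun t ht => (hθ t ht).continuousAt.continuousWithinAt)
      (fun t ht => (hθ' t (interior_subset ht)).hasDerivWithinAt)
      (fun t ht => pruferField_neg (mul_pos hlam (hA_pos t (interior_subset ht))) _)
  have hcos : ∀ s ∈ Ioo (tm - tm) tm, cos (θ s) ≠ 0 := by
    intro s hs
    rw [sub_self] at hs
    have hs' : s ∈ Icc (0:ℝ) 1 := ⟨hs.1.le, by linarith [hs.2]⟩
    have hlo := hanti hs' (right_mem_Icc.2 zero_le_one) (by linarith [hs.2])
    have hhi := hanti (left_mem_Icc.2 zero_le_one) hs' hs.1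
    exact (cos_pos_of_mem_Ioo ⟨by linarith, by linarith⟩).ne'
  have hsum := pruferField_reflect_add_neg htm.1
    (fun s hs t ht hst => mul_lt_mul_of_pos_left (hA_mono (hsub hs) (hsub ht) hst) hlam)
    (fun t ht => hθ' t (hsub ht)) hθtm hcos
  have hend : θ 1 ≤ θ (tm + tm) :=
    hanti.antitoneOn (hsub (right_mem_Icc.2 (by linarith [htm.1]))) (right_mem_Icc.2 zero_le_one)
      (by linarith)
  rw [sub_self, hθ0] at hsum
  linarith

theorem stmt18 (A θ : ℝ → ℝ) (lam tm : ℝ)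
    (hlam : 0 < lam)
    (hA_cont : ContinuousOn A (Icc 0 1))
    (hA_pos : ∀ t ∈ Icc (0:ℝ) 1, 0 < A t)
    (hA_mono : StrictMonoOn A (Icc 0 1))
    (hθ : ∀ t ∈ Icc (0:ℝ) 1,
      HasDerivAt θ (-(Real.sin (θ t)) ^ 2 - lam * A t * (Real.cos (θ t)) ^ 2) t)
    (hθ0 : θ 0 = Real.pi / 2)
    (hθ1 : θ 1 = -(Real.pi / 2))
    (htm : tm ∈ Ioo (0:ℝ) 1)
    (hθtm : θ tm = 0) :
    1 / 2 < tm :=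
  stmt18_general A θ lam tm hlam hA_pos hA_mono hθ hθ0 hθ1 htm hθtm
end
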